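/- Let M be a Koszul A-module. Then for each i ≥ 0 the A_0-module Ω^i(M)/JΩ^i(M) ≅ Ω^i(M)_i is projective, where Ω denotes the graded syzygy operator. -/

import Mathlib

open DirectSum CategoryTheory

namespace GenK

variable (k A : Type) [Field k] [Ring A] [Algebra k A] (𝒜 : ℕ → Submodule k A)

/-- The ideal `J = ⊕_{i ≥ 1} A_i`, as the left ideal generated by the
positive-degree homogeneous components. -/
noncomputable def Jideal : Ideal A :=
  Submodule.span A (⋃ i : ℕ, ((𝒜 (i + 1) : Submodule k A) : Set A))

/-- A locally finite graded module over the graded algebra `A = ⊕ 𝒜 i`. -/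
structure GMod [GradedAlgebra 𝒜] where
  M : Type
  [acg : AddCommGroup M]
  [modA : Module A M]
  [modk : Module k M]
  [tower : IsScalarTower k A M]
  gr : ℕ → Submodule k M
  [decomp : DirectSum.Decomposition gr]
  [gsmul : SetLike.GradedSMul 𝒜 gr]
  locFin : ∀ i, FiniteDimensional k (gr i)

attribute [instance] GMod.acg GMod.modA GMod.modk GMod.tower GMod.decomp GMod.gsmul

variable {k A 𝒜} [GradedAlgebra 𝒜]

/-- A graded module is generated in degree `s` if `M = A · M_s`. -/
def GMod.gen (N : GMod k A 𝒜) (s : ℕ) : Prop :=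
  Submodule.span A ((N.gr s : Submodule k N.M) : Set N.M) = ⊤

instance (N : GMod k A 𝒜) (i : ℕ) : SMul (𝒜 0) (N.gr i) :=
  ⟨fun a m => ⟨(a : A) • (m : N.M), by
    have h := SetLike.GradedSMul.smul_mem (A := 𝒜) (B := N.gr) a.2 m.2
    simpa using h⟩⟩

@[simp] lemma GMod.smul_coe (N : GMod k A 𝒜) (i : ℕ) (a : 𝒜 0) (m : N.gr i) :
    ((a • m : N.gr i) : N.M) = (a : A) • (m : N.M) := rfl

/-- The degree `i` component of a graded module is a module over `A₀ = 𝒜 0`. -/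
instance (N : GMod k A 𝒜) (i : ℕ) : Module (𝒜 0) (N.gr i) where
  one_smul m := Subtype.ext (by simp)
  mul_smul a b m := Subtype.ext (by simp [mul_smul])
  smul_zero a := Subtype.ext (by simp)
  smul_add a m n := Subtype.ext (by simp)
  add_smul a b m := Subtype.ext (by simp [add_smul])
  zero_smul m := Subtype.ext (by simp)

/-- A tower of minimal graded projective covers computing the graded syzygies
`N i = Ω^i(M₀)`, with `P i` a graded projective cover of `N i`. -/
structure SyzTower (M₀ : GMod k A 𝒜) where
  N : ℕ → GMod k A 𝒜
  zero : N 0 = M₀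
  P : ℕ → GMod k A 𝒜
  proj : ∀ i, Module.Projective A (P i).M
  p : ∀ i, (P i).M →ₗ[A] (N i).M
  surj : ∀ i, Function.Surjective (p i)
  graded : ∀ i j, ∀ x ∈ (P i).gr j, p i x ∈ (N i).gr j
  small : ∀ i (Q : Submodule A (P i).M), Q ⊔ LinearMap.ker (p i) = ⊤ → Q = ⊤
  ι : ∀ i, (N (i + 1)).M →ₗ[A] (P i).M
  inj : ∀ i, Function.Injective (ι i)
  rng : ∀ i, LinearMap.range (ι i) = LinearMap.ker (p i)
  gr_eq : ∀ i j, (N (i + 1)).gr j = ((P i).gr j).comap ((ι i).restrictScalars k)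

/-- `M` is a Koszul module: it is generated in degree 0 and has a (minimal) graded
projective resolution whose `i`-th term is generated in degree `i`. -/
def IsKoszul (M₀ : GMod k A 𝒜) : Prop :=
  M₀.gen 0 ∧ ∃ T : SyzTower M₀, ∀ i, (T.P i).gen i

end GenK

/-- `A₀ = 𝒜 0` is a self-injective algebra: every projective `A₀`-module is injective. -/
def GenK.SelfInjectiveDegZero (k A : Type) [Field k] [Ring A] [Algebra k A]
    (𝒜 : ℕ → Submodule k A) [GradedAlgebra 𝒜] : Prop :=
  ∀ (V : Type) [AddCommGroup V] [Module (𝒜 0) V],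
    Module.Projective (𝒜 0) V → Module.Injective (𝒜 0) V

/-!
Minimal graded projective covers are unique up to graded isomorphism: a graded lift between
two of them exists (the degree-preserving component of any lift is again a lift), it is
surjective because the kernels are superfluous, and a splitting of it in the
other direction is surjective for the same reason. Hence `Ω^i(M)` does not depend on the
tower, and we may compute with one in which `P^i` is generated in degree `i`. For such a tower
`P^i_i → Ω^i(M)_i` is onto, and its kernel is `Ω^{i+1}(M)_i`, a quotient of `P^{i+1}_i = 0`.
Finally `P^i_i` is projective over `A₀`: a splitting of the free cover `A^{(P^i_i)} → P^i`,
followed by taking degree-zero parts of the coefficients, splits `A₀^{(P^i_i)} → P^i_i`.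
-/

section SuperfluousKernel

variable {R P P' N N' K K' : Type*} [Ring R]
  [AddCommGroup P] [Module R P] [AddCommGroup P'] [Module R P']
  [AddCommGroup N] [Module R N] [AddCommGroup N'] [Module R N']
  [AddCommGroup K] [Module R K] [AddCommGroup K'] [Module R K']

lemma LinearMap.surjective_of_surjective_comp_of_superfluous_ker {p : P' →ₗ[R] N'}
    (hp : ∀ Q : Submodule R P', Q ⊔ LinearMap.ker p = ⊤ → Q = ⊤) {f : P →ₗ[R] P'}
    (hpf : Function.Surjective (p ∘ₗ f)) : Function.Surjective f := by
  rw [← LinearMap.range_eq_top]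
  refine hp _ (Submodule.eq_top_iff'.2 fun x => ?_)
  obtain ⟨z, hz⟩ := hpf (p x)
  refine Submodule.mem_sup.2 ⟨f z, ⟨z, rfl⟩, x - f z, ?_, add_sub_cancel _ _⟩
  rw [LinearMap.mem_ker, map_sub, ← LinearMap.comp_apply, hz, sub_self]

lemma LinearMap.bijective_of_comp_eq_of_superfluous_ker [Module.Projective R P']
    {p : P →ₗ[R] N} {p' : P' →ₗ[R] N'} (hps : Function.Surjective p)
    (hps' : Function.Surjective p')
    (hp : ∀ Q : Submodule R P, Q ⊔ LinearMap.ker p = ⊤ → Q = ⊤)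
    (hp' : ∀ Q : Submodule R P', Q ⊔ LinearMap.ker p' = ⊤ → Q = ⊤)
    {e : N →ₗ[R] N'} (he : Function.Bijective e) {f : P →ₗ[R] P'} (hf : p' ∘ₗ f = e ∘ₗ p) :
    Function.Bijective f := by
  have hfs : Function.Surjective f :=
    surjective_of_surjective_comp_of_superfluous_ker hp' (hf ▸ he.2.comp hps)
  obtain ⟨g, hg⟩ := Module.projective_lifting_property f LinearMap.id hfs
  have hfg : Function.LeftInverse f g := LinearMap.congr_fun hg
  have hgs : Function.Surjective g := by
    refine surjective_of_surjective_comp_of_superfluous_ker hp fun n => ?_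
    obtain ⟨y, hy⟩ := hps' (e n)
    refine ⟨y, he.1 ?_⟩
    rw [LinearMap.comp_apply, ← LinearMap.comp_apply e p, ← hf, LinearMap.comp_apply, hfg y, hy]
  exact ⟨(hfg.rightInverse_of_surjective hgs).injective, hfs⟩

lemma LinearMap.exists_equiv_of_comp_eq {ι : K →ₗ[R] P} {ι' : K' →ₗ[R] P'}
    (hι : Function.Injective ι) (hι' : Function.Injective ι')
    {p : P →ₗ[R] N} {p' : P' →ₗ[R] N'} (hrange : LinearMap.range ι = LinearMap.ker p)
    (hrange' : LinearMap.range ι' = LinearMap.ker p') {e : N →ₗ[R] N'}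
    (he : Function.Injective e) (F : P ≃ₗ[R] P') (hF : p' ∘ₗ F = e ∘ₗ p) :
    ∃ e' : K ≃ₗ[R] K', ∀ n, ι' (e' n) = F (ι n) := by
  have hker : (LinearMap.range ι).map (F : P →ₗ[R] P') = LinearMap.range ι' := by
    rw [hrange, hrange', ← Submodule.map_comap_eq_of_surjective F.surjective (LinearMap.ker p'),
      ← LinearMap.ker_comp, hF, LinearMap.ker_comp, LinearMap.ker_eq_bot.2 he, Submodule.comap_bot]
  exact ⟨(LinearEquiv.ofInjective ι hι).trans <|
    (F.ofSubmodules _ _ hker).trans (LinearEquiv.ofInjective ι' hι').symm, fun n => by simp⟩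

end SuperfluousKernel

namespace GenK

variable {k A : Type} [Field k] [Ring A] [Algebra k A] {𝒜 : ℕ → Submodule k A}
  [GradedAlgebra 𝒜]

namespace GMod

variable (N : GMod k A 𝒜)

noncomputable def proj (j : ℕ) : N.M →+ N.M :=
  (N.gr j).subtype.toAddMonoidHom.comp
    ((DFinsupp.evalAddMonoidHom j).comp (decomposeAddEquiv N.gr).toAddMonoidHom)

variable {N}

lemma proj_mem (j : ℕ) (x : N.M) : N.proj j x ∈ N.gr j := (decompose N.gr x j).2

lemma proj_of_mem_same {j : ℕ} {x : N.M} (hx : x ∈ N.gr j) : N.proj j x = x :=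
  decompose_of_mem_same N.gr hx

lemma proj_of_mem_ne {j l : ℕ} {x : N.M} (hx : x ∈ N.gr j) (h : j ≠ l) : N.proj l x = 0 :=
  decompose_of_mem_ne N.gr hx h

lemma smul_mem_gr {a : A} {m t : ℕ} {y : N.M} (ha : a ∈ 𝒜 m) (hy : y ∈ N.gr t) :
    a • y ∈ N.gr (m + t) := by
  simpa using SetLike.GradedSMul.smul_mem (A := 𝒜) (B := N.gr) ha hy

lemma proj_smul_of_mem {a : A} {m : ℕ} (ha : a ∈ 𝒜 m) (x : N.M) (j : ℕ) :
    N.proj j (a • x) = if m ≤ j then a • N.proj (j - m) x else 0 := by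
  induction x using DirectSum.Decomposition.inductionOn N.gr with
  | zero => simp
  | @homogeneous t y =>
    by_cases h : m + t = j
    · subst h
      rw [proj_of_mem_same (smul_mem_gr ha y.2), if_pos (by omega), Nat.add_sub_cancel_left,
        proj_of_mem_same y.2]
    · rw [proj_of_mem_ne (smul_mem_gr ha y.2) h]
      split_ifs
      · rw [proj_of_mem_ne y.2 (by omega), smul_zero]
      · rfl
  | add x x' hx hx' =>
    rw [smul_add, map_add, hx, hx', map_add]
    split_ifs <;> simp [smul_add]

lemma proj_smul_of_mem_gr {s : ℕ} {y : N.M} (hy : y ∈ N.gr s) (a : A) :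
    N.proj s (a • y) = (decompose 𝒜 a 0 : A) • y := by
  induction a using DirectSum.Decomposition.inductionOn 𝒜 with
  | zero => simp
  | @homogeneous m b =>
    rw [proj_smul_of_mem b.2]
    by_cases hm : m = 0
    · subst hm
      rw [if_pos (Nat.zero_le s), Nat.sub_zero, proj_of_mem_same hy,
        decompose_of_mem_same 𝒜 b.2]
    · rw [decompose_of_mem_ne 𝒜 b.2 hm, zero_smul]
      split_ifs
      · rw [proj_of_mem_ne hy (by omega), smul_zero]
      · rfl
  | add a a' ha ha' =>
    rw [add_smul, map_add, ha, ha', decompose_add, DirectSum.add_apply, Submodule.coe_add,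
      add_smul]

lemma proj_smul_eq_zero {s : ℕ} {x : N.M} (hx : ∀ j < s, N.proj j x = 0) (a : A) {j : ℕ}
    (hj : j < s) : N.proj j (a • x) = 0 := by
  induction a using DirectSum.Decomposition.inductionOn 𝒜 with
  | zero => simp
  | homogeneous b =>
    rw [proj_smul_of_mem b.2]
    split_ifs
    · rw [hx _ (by omega), smul_zero]
    · rfl
  | add a a' ha ha' => rw [add_smul, map_add, ha, ha', add_zero]

lemma eq_zero_of_mem_gr_of_gen {s j : ℕ} (hN : N.gen s) (hj : j < s) {x : N.M}
    (hx : x ∈ N.gr j) : x = 0 := by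
  have hlow : ∀ y ∈ Submodule.span A (N.gr s : Set N.M), ∀ l < s, N.proj l y = 0 := by
    intro y hy
    induction hy using Submodule.span_induction with
    | mem y hy => exact fun l hl => proj_of_mem_ne hy (by omega)
    | zero => simp
    | add y y' _ _ hy hy' => exact fun l hl => by rw [map_add, hy l hl, hy' l hl, add_zero]
    | smul a y _ hy => exact fun l hl => proj_smul_eq_zero hy a hl
  rw [← proj_of_mem_same hx]
  exact hlow x (hN ▸ Submodule.mem_top) j hj

end GMod

section GradedMap

variable {N N' L : GMod k A 𝒜}

def IsGradedMap (f : N.M →ₗ[A] N'.M) : Prop :=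
  ∀ j, ∀ x ∈ N.gr j, f x ∈ N'.gr j

namespace IsGradedMap

variable {f : N.M →ₗ[A] N'.M} (hf : IsGradedMap f)
include hf

lemma comp {g : N'.M →ₗ[A] L.M} (hg : IsGradedMap g) : IsGradedMap (g ∘ₗ f) :=
  fun j x hx => hg j _ (hf j x hx)

lemma proj_apply (j : ℕ) (x : N.M) : N'.proj j (f x) = f (N.proj j x) := by
  induction x using DirectSum.Decomposition.inductionOn N.gr with
  | zero => simp
  | @homogeneous t y =>
    by_cases htj : t = j
    · subst htj
      rw [GMod.proj_of_mem_same (hf t y y.2), GMod.proj_of_mem_same y.2]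
    · rw [GMod.proj_of_mem_ne (hf t y y.2) htj, GMod.proj_of_mem_ne y.2 htj, map_zero]
  | add x x' hx hx' => rw [map_add, map_add, hx, hx', map_add, map_add]

lemma exists_mem_gr_of_surjective (hs : Function.Surjective f) {j : ℕ} {y : N'.M}
    (hy : y ∈ N'.gr j) : ∃ x ∈ N.gr j, f x = y := by
  obtain ⟨x, rfl⟩ := hs y
  exact ⟨N.proj j x, N.proj_mem j x, by rw [← hf.proj_apply, GMod.proj_of_mem_same hy]⟩

noncomputable def restrictGr (j : ℕ) : N.gr j →ₗ[𝒜 0] N'.gr j where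
  toFun x := ⟨f x, hf j x x.2⟩
  map_add' x y := Subtype.ext (map_add f (x : N.M) y)
  map_smul' a x := Subtype.ext (map_smul f (a : A) (x : N.M))

lemma restrictGr_bijective (hbij : Function.Bijective f) (j : ℕ) :
    Function.Bijective (hf.restrictGr j) := by
  refine ⟨fun x y hxy => Subtype.ext (hbij.1 (congrArg Subtype.val hxy)), fun y => ?_⟩
  obtain ⟨x, hx, hxy⟩ := hf.exists_mem_gr_of_surjective hbij.2 y.2
  exact ⟨⟨x, hx⟩, Subtype.ext hxy⟩

end IsGradedMap

section GradedPart

variable (f : N.M →ₗ[A] N'.M)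

/-- `x ↦ ∑ⱼ (f xⱼ)ⱼ`, the degree-preserving component of `f`. -/
noncomputable def gradedPartAddHom : N.M →+ N'.M :=
  (toAddMonoid fun j =>
      (N'.proj j).comp (f.toAddMonoidHom.comp (N.gr j).subtype.toAddMonoidHom)).comp
    (decomposeAddEquiv N.gr).toAddMonoidHom

lemma gradedPartAddHom_of_mem {j : ℕ} {x : N.M} (hx : x ∈ N.gr j) :
    gradedPartAddHom f x = N'.proj j (f x) := by
  simp [gradedPartAddHom, decomposeAddEquiv, decompose_of_mem N.gr hx]

noncomputable def gradedPart : N.M →ₗ[A] N'.M where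
  __ := gradedPartAddHom f
  map_smul' a x := by
    induction x using DirectSum.Decomposition.inductionOn N.gr with
    | zero => simp
    | @homogeneous t y =>
      induction a using DirectSum.Decomposition.inductionOn 𝒜 with
      | zero => simp
      | @homogeneous m b =>
        simp only [AddMonoidHom.toFun_eq_coe, RingHom.id_apply]
        rw [gradedPartAddHom_of_mem f (N.smul_mem_gr b.2 y.2), gradedPartAddHom_of_mem f y.2,
          map_smul, N'.proj_smul_of_mem b.2, if_pos (Nat.le_add_right m t),
          Nat.add_sub_cancel_left]
      | add b b' hb hb' => simp_all [add_smul]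
    | add x x' hx hx' => simp_all [smul_add]

lemma gradedPart_of_mem {j : ℕ} {x : N.M} (hx : x ∈ N.gr j) :
    gradedPart f x = N'.proj j (f x) :=
  gradedPartAddHom_of_mem f hx

lemma isGradedMap_gradedPart : IsGradedMap (gradedPart f) := fun j x hx => by
  rw [gradedPart_of_mem f hx]
  exact N'.proj_mem j (f x)

lemma comp_gradedPart {g : N'.M →ₗ[A] L.M} (hg : IsGradedMap g) (hgf : IsGradedMap (g ∘ₗ f)) :
    g ∘ₗ gradedPart f = g ∘ₗ f := by
  ext x
  induction x using DirectSum.Decomposition.inductionOn N.gr with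
  | zero => simp
  | @homogeneous t y =>
    rw [LinearMap.comp_apply, gradedPart_of_mem f y.2, ← hg.proj_apply,
      ← LinearMap.comp_apply g f, GMod.proj_of_mem_same (hgf t y y.2)]
  | add x x' hx hx' => rw [map_add, hx, hx', map_add]

end GradedPart

lemma exists_isGradedMap_lift {P : GMod k A 𝒜} [Module.Projective A P.M]
    {p : N.M →ₗ[A] N'.M} (hp : IsGradedMap p) (hps : Function.Surjective p)
    {q : P.M →ₗ[A] N'.M} (hq : IsGradedMap q) :
    ∃ f : P.M →ₗ[A] N.M, IsGradedMap f ∧ p ∘ₗ f = q := by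
  obtain ⟨f, hf⟩ := Module.projective_lifting_property p q hps
  refine ⟨gradedPart f, isGradedMap_gradedPart f, ?_⟩
  rw [comp_gradedPart f hp (hf ▸ hq), hf]

end GradedMap

namespace GMod

variable {P : GMod k A 𝒜} {s : ℕ}

lemma proj_linearCombination (c : P.gr s →₀ A) :
    P.proj s (Finsupp.linearCombination A ((↑) : P.gr s → P.M) c) =
      Finsupp.linearCombination (𝒜 0) id (c.mapRange (fun a => decompose 𝒜 a 0) (by simp)) := by
  induction c using Finsupp.induction_linear with
  | zero => simp
  | add c c' hc hc' =>
    rw [map_add, map_add, hc, hc', Finsupp.mapRange_add (by simp), map_add, Submodule.coe_add]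
  | single g a =>
    simp [proj_smul_of_mem_gr g.2]

lemma projective_gr_of_gen (P : GMod k A 𝒜) [Module.Projective A P.M] {s : ℕ}
    (hgen : P.gen s) : Module.Projective (𝒜 0) (P.gr s) := by
  classical
  let π : (P.gr s →₀ A) →ₗ[A] P.M := Finsupp.linearCombination A (↑)
  have hπ : Function.Surjective π := by
    rw [← LinearMap.range_eq_top, Finsupp.range_linearCombination, Subtype.range_coe]
    exact hgen
  obtain ⟨σ, hσ⟩ := Module.projective_lifting_property π LinearMap.id hπ
  let σ₀ : P.gr s →ₗ[𝒜 0] (P.gr s →₀ 𝒜 0) :=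
    { toFun x := (σ x).mapRange (fun a => decompose 𝒜 a 0) (by simp)
      map_add' x y := by
        simp only [Submodule.coe_add, map_add]
        exact Finsupp.mapRange_add (by simp) _ _
      map_smul' a x := by
        ext g
        simp only [GMod.smul_coe, map_smul, Finsupp.mapRange_apply, Finsupp.smul_apply,
          smul_eq_mul, RingHom.id_apply]
        rw [SetLike.GradeZero.coe_mul]
        exact coe_decompose_mul_of_left_mem_zero 𝒜 a.2 }
  refine .of_split σ₀ (Finsupp.linearCombination (𝒜 0) id)
    (LinearMap.ext fun x => Subtype.ext ?_)
  calc _ = P.proj s (π (σ x)) := (proj_linearCombination (σ x)).symm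
    _ = x := by rw [← LinearMap.comp_apply π σ, hσ, LinearMap.id_apply, proj_of_mem_same x.2]

end GMod

def GMod.GrIsomorphic (N N' : GMod k A 𝒜) : Prop :=
  ∃ e : N.M →ₗ[A] N'.M, Function.Bijective e ∧ IsGradedMap e

lemma GMod.GrIsomorphic.refl (N : GMod k A 𝒜) : N.GrIsomorphic N :=
  ⟨LinearMap.id, Function.bijective_id, fun _ _ hx => hx⟩

lemma GMod.GrIsomorphic.projective_gr {N N' : GMod k A 𝒜} (h : N.GrIsomorphic N') {j : ℕ}
    [Module.Projective (𝒜 0) (N.gr j)] : Module.Projective (𝒜 0) (N'.gr j) := by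
  obtain ⟨e, he, hegr⟩ := h
  exact .of_equiv (LinearEquiv.ofBijective _ (hegr.restrictGr_bijective he j))

namespace SyzTower

variable {M₀ : GMod k A 𝒜}

lemma isGradedMap_p (T : SyzTower M₀) (i : ℕ) : IsGradedMap (T.p i) := T.graded i

lemma grIsomorphic_succ (T T' : SyzTower M₀) {i : ℕ} (h : (T.N i).GrIsomorphic (T'.N i)) :
    (T.N (i + 1)).GrIsomorphic (T'.N (i + 1)) := by
  obtain ⟨e, he, hegr⟩ := h
  have := T.proj i
  have := T'.proj i
  obtain ⟨f, hfgr, hf⟩ :=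
    exists_isGradedMap_lift (T'.isGradedMap_p i) (T'.surj i) ((T.isGradedMap_p i).comp hegr)
  have hfbij := LinearMap.bijective_of_comp_eq_of_superfluous_ker (T.surj i) (T'.surj i)
    (T.small i) (T'.small i) he hf
  obtain ⟨e', he'⟩ := LinearMap.exists_equiv_of_comp_eq (T.inj i) (T'.inj i) (T.rng i)
    (T'.rng i) he.1 (LinearEquiv.ofBijective f hfbij) hf
  refine ⟨e', e'.bijective, fun j n hn => ?_⟩
  rw [T.gr_eq] at hn
  rw [T'.gr_eq, Submodule.mem_comap, LinearMap.restrictScalars_apply, LinearEquiv.coe_coe, he']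
  exact hfgr j _ hn

lemma grIsomorphic (T T' : SyzTower M₀) (i : ℕ) : (T.N i).GrIsomorphic (T'.N i) := by
  induction i with
  | zero => rw [T.zero, T'.zero]; exact .refl M₀
  | succ i ih => exact T.grIsomorphic_succ T' ih

lemma restrictGr_p_bijective (T : SyzTower M₀) {i : ℕ} (hgen : (T.P (i + 1)).gen (i + 1)) :
    Function.Bijective ((T.isGradedMap_p i).restrictGr i) := by
  refine ⟨fun x y hxy => ?_, fun y => ?_⟩
  · have hker : (x - y : (T.P i).M) ∈ LinearMap.range (T.ι i) := by
      rw [T.rng i, LinearMap.mem_ker, map_sub, sub_eq_zero]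
      exact congrArg Subtype.val hxy
    obtain ⟨n, hn⟩ := hker
    have hn_gr : n ∈ (T.N (i + 1)).gr i := by
      rw [T.gr_eq, Submodule.mem_comap, LinearMap.restrictScalars_apply, hn]
      exact Submodule.sub_mem _ x.2 y.2
    obtain ⟨z, hz, rfl⟩ :=
      (T.isGradedMap_p (i + 1)).exists_mem_gr_of_surjective (T.surj (i + 1)) hn_gr
    rw [GMod.eq_zero_of_mem_gr_of_gen hgen (Nat.lt_succ_self i) hz, map_zero, map_zero] at hn
    exact Subtype.ext (sub_eq_zero.1 hn.symm)
  · obtain ⟨x, hx, hxy⟩ := (T.isGradedMap_p i).exists_mem_gr_of_surjective (T.surj i) y.2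
    exact ⟨⟨x, hx⟩, Subtype.ext hxy⟩

lemma projective_gr_of_gen (T : SyzTower M₀) (hT : ∀ i, (T.P i).gen i) (i : ℕ) :
    Module.Projective (𝒜 0) ((T.N i).gr i) := by
  have := T.proj i
  have := (T.P i).projective_gr_of_gen (hT i)
  exact .of_equiv (LinearEquiv.ofBijective _ (T.restrictGr_p_bijective (hT (i + 1))))

end SyzTower

end GenK

open GenK in
theorem stmt5_general (k A : Type) [Field k] [Ring A] [Algebra k A] (𝒜 : ℕ → Submodule k A)
    [GradedAlgebra 𝒜]
    (M₀ : GMod k A 𝒜) (hK : IsKoszul M₀)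
    (T : SyzTower M₀) (i : ℕ) :
    Module.Projective (𝒜 0) ((T.N i).gr i) := by
  obtain ⟨-, T', hT'⟩ := hK
  have := T'.projective_gr_of_gen hT' i
  exact (T'.grIsomorphic T i).projective_gr

open GenK in
/-- if `M` is a Koszul `A`-module, then for each `i ≥ 0` the degree-`i`
component `Ω^i(M)_i ≅ Ω^i(M)/JΩ^i(M)` of the `i`-th graded syzygy is a projective
`A₀`-module. (`T` is any tower of minimal graded projective covers, so `T.N i = Ω^i(M)`.) -/
theorem stmt5 (k A : Type) [Field k] [Ring A] [Algebra k A] (𝒜 : ℕ → Submodule k A)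
    [GradedAlgebra 𝒜]
    (hloc : ∀ i, FiniteDimensional k (𝒜 i))
    (hgen01 : ∀ i j, 𝒜 i * 𝒜 j = 𝒜 (i + j))
    (hsi : SelfInjectiveDegZero k A 𝒜)
    (M₀ : GMod k A 𝒜) (hK : IsKoszul M₀)
    (T : SyzTower M₀) (i : ℕ) :
    Module.Projective (𝒜 0) ((T.N i).gr i) :=
  stmt5_general k A 𝒜 M₀ hK T i
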